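/- For each l ∈ {1,2,3} and each sign δ ∈ {+1,−1}, the idempotent P_l^δ satisfies the inhomogeneous proper-value equation (K+1)(P_l^δ) = 2 P_l^δ − 1 (proper value 2, co-value −1). -/

import Mathlib

open scoped TensorProduct

noncomputable section

/-- The standard positive-definite quadratic form on `ℝ³`. -/
abbrev Q3 : QuadraticForm ℝ (Fin 3 → ℝ) :=
  QuadraticMap.weightedSumSquares ℝ (fun _ : Fin 3 => (1 : ℝ))

/-- The Clifford algebra of 3-dimensional Euclidean space. -/
abbrev Cl3 : Type := CliffordAlgebra Q3

/-- The tensor product of two copies of `Cl3`, as ℝ-algebras. -/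
abbrev A3 : Type := Cl3 ⊗[ℝ] Cl3

/-- The generators `e₁, e₂, e₃` (indexed by `Fin 3`). -/
def e (l : Fin 3) : Cl3 := CliffordAlgebra.ι Q3 (Pi.single l 1)

/-- `X_l := e_l ⊗ e_l`. -/
def X (l : Fin 3) : A3 := e l ⊗ₜ[ℝ] e l

/-- `w^i := (e_j e_k) ⊗ 1` for `(i,j,k)` a cyclic permutation of the indices. -/
def w (i : Fin 3) : A3 := (e (i + 1) * e (i + 2)) ⊗ₜ[ℝ] (1 : Cl3)

/-- The (ℝ-linear) operators `J_l(U) := (1/2)(w^l U − U w^l)`. -/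
def J (l : Fin 3) (U : A3) : A3 := (1/2 : ℝ) • (w l * U - U * w l)

/-- Kähler's total angular momentum operator `K+1`. -/
def K1 (U : A3) : A3 := J 0 U * w 0 + J 1 U * w 1 + J 2 U * w 2

/-- The idempotents `I_{ij}^ε := (1/2)(1 + ε X_i X_j)`. -/
def Iem (i j : Fin 3) (ε : ℝ) : A3 := (1/2 : ℝ) • ((1 : A3) + ε • (X i * X j))

/-- The idempotents `P_l^δ := (1/2)(1 + δ X_l)`. -/
def P (l : Fin 3) (δ : ℝ) : A3 := (1/2 : ℝ) • ((1 : A3) + δ • X l)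

/-! `X_m` commutes with `w^m` and anticommutes with the two other `w^l`, and `(w^l)² = -1`.
Hence `J_l(X_m) w^l` is `0` for `l = m` and `w^l X_m w^l = -(w^l)² X_m = X_m` otherwise, so
`(K+1)(X_m) = 2 X_m`; as `(K+1)(1) = 0` and `K+1` is linear, `(K+1)(1 + δ X_m) = 2 δ X_m`. -/

lemma e_mul_self (l : Fin 3) : e l * e l = 1 := by
  rw [e, CliffordAlgebra.ι_sq_scalar]
  simp [QuadraticMap.weightedSumSquares_apply, Pi.single_apply]

lemma e_mul_e_of_ne {l m : Fin 3} (h : l ≠ m) : e l * e m = -(e m * e l) := by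
  have hpolar : QuadraticMap.polar Q3 (Pi.single l 1) (Pi.single m 1) = 0 := by
    simp only [QuadraticMap.polar, QuadraticMap.weightedSumSquares_apply, Pi.add_apply,
      Pi.single_apply, smul_eq_mul, one_mul, mul_ite, mul_one, mul_zero, Finset.sum_ite_eq',
      Finset.mem_univ, ↓reduceIte]
    fin_cases l <;> fin_cases m <;> simp_all [Fin.sum_univ_three]
  have hswap := CliffordAlgebra.ι_mul_ι_add_swap (Q := Q3) (Pi.single l 1) (Pi.single m 1)
  rw [hpolar, map_zero] at hswap
  exact eq_neg_of_add_eq_zero_left hswap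

lemma mul_mul_eq_mul_mul_of_anticomm {R : Type*} [Ring R] {a b c : R}
    (hab : a * b = -(b * a)) (hac : a * c = -(c * a)) : a * (b * c) = b * c * a := by
  rw [← mul_assoc, hab, neg_mul, mul_assoc, hac, mul_neg, neg_neg, mul_assoc]

lemma e_mul_bivector_self (l : Fin 3) :
    e l * (e (l + 1) * e (l + 2)) = e (l + 1) * e (l + 2) * e l :=
  mul_mul_eq_mul_mul_of_anticomm (e_mul_e_of_ne (by fin_cases l <;> decide))
    (e_mul_e_of_ne (by fin_cases l <;> decide))

lemma e_mul_bivector_of_ne {l m : Fin 3} (h : m ≠ l) :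
    e m * (e (l + 1) * e (l + 2)) = -(e (l + 1) * e (l + 2) * e m) := by
  have hne : l + 1 ≠ l + 2 := by fin_cases l <;> decide
  obtain rfl | rfl : m = l + 1 ∨ m = l + 2 := by fin_cases l <;> fin_cases m <;> simp_all
  · rw [← mul_assoc, e_mul_self, one_mul, mul_assoc, e_mul_e_of_ne hne.symm, mul_neg,
      ← mul_assoc, e_mul_self, one_mul, neg_neg]
  · rw [← mul_assoc, e_mul_e_of_ne hne.symm, neg_mul, mul_assoc, e_mul_self, mul_one]

lemma bivector_mul_self (l : Fin 3) : e (l + 1) * e (l + 2) * (e (l + 1) * e (l + 2)) = -1 := by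
  have hne : l + 1 ≠ l + 2 := by fin_cases l <;> decide
  rw [mul_assoc, ← mul_assoc (e (l + 2)), e_mul_e_of_ne hne.symm, neg_mul, mul_neg,
    mul_assoc, e_mul_self, mul_one, e_mul_self]

lemma w_mul_self (l : Fin 3) : w l * w l = -1 := by
  rw [w, Algebra.TensorProduct.tmul_mul_tmul, bivector_mul_self, mul_one,
    TensorProduct.neg_tmul, Algebra.TensorProduct.one_def]

lemma X_mul_w_self (l : Fin 3) : X l * w l = w l * X l := by
  simp only [X, w, Algebra.TensorProduct.tmul_mul_tmul, mul_one, one_mul, e_mul_bivector_self]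

lemma X_mul_w_of_ne {l m : Fin 3} (h : m ≠ l) : X m * w l = -(w l * X m) := by
  simp only [X, w, Algebra.TensorProduct.tmul_mul_tmul, mul_one, one_mul,
    e_mul_bivector_of_ne h, TensorProduct.neg_tmul]

lemma J_X_mul_w (l m : Fin 3) : J l (X m) * w l = if l = m then 0 else X m := by
  split_ifs with h
  · subst h
    simp [J, X_mul_w_self]
  · have hJ : J l (X m) = w l * X m := by
      rw [J, X_mul_w_of_ne (Ne.symm h), sub_neg_eq_add, ← two_smul ℝ, smul_smul]
      norm_num
    rw [hJ, mul_assoc, X_mul_w_of_ne (Ne.symm h), mul_neg, ← mul_assoc, w_mul_self,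
      neg_mul, one_mul, neg_neg]

lemma K1_X (m : Fin 3) : K1 (X m) = (2 : ℝ) • X m := by
  simp only [K1, J_X_mul_w]
  fin_cases m <;>
  · simp only [Fin.isValue, Fin.zero_eta, Fin.mk_one, Fin.reduceFinMk, Fin.reduceEq, ↓reduceIte]
    module

lemma K1_one : K1 1 = 0 := by
  simp [K1, J]

lemma K1_add (U V : A3) : K1 (U + V) = K1 U + K1 V := by
  simp only [K1, J, mul_add, add_mul, smul_add, smul_sub, sub_mul]
  module

lemma K1_smul (r : ℝ) (U : A3) : K1 (r • U) = r • K1 U := by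
  simp only [K1, J, mul_smul_comm, smul_mul_assoc, smul_sub, smul_add, smul_smul, sub_mul]
  module

theorem stmt5_general (l : Fin 3) (δ : ℝ) :
    K1 (P l δ) = 2 * P l δ - 1 := by
  rw [P, K1_smul, K1_add, K1_one, K1_smul, K1_X, two_mul]
  module

/-- For each `l` and each sign `δ`, the idempotent `P_l^δ` satisfies the
inhomogeneous proper-value equation `(K+1)(P_l^δ) = 2 P_l^δ − 1`. -/
theorem stmt5 (l : Fin 3) (δ : ℝ) (hδ : δ = 1 ∨ δ = -1) :
    K1 (P l δ) = 2 * P l δ - 1 :=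
  stmt5_general l δ
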